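/- arXiv:2103.12267 — 2 statements merged into one kernel-verified Lean document; each statement's English description precedes it below -/
import Mathlib

section
/- (Continuity of point evaluations on the range of the analysis operator) Let K be a complex Hilbert space with fundamental symmetry J, [h,k] := ⟨h, J k⟩, let {η_x^1,…,η_x^n}_{x∈M} be a continuous frame of rank n for (K,[·,·]) with frame operator S. Then for every x ∈ M and every i the number [η_x^i, S⁻¹η_x^i] = ⟨η_x^i, (J∘S⁻¹)η_x^i⟩ is a nonnegative real number, and for every k ∈ K and every x ∈ M: ∑_{i=1}^n |[η_x^i, k]|² ≤ (∑_{i=1}^n [η_x^i, S⁻¹η_x^i]) · (∑_{i=1}^n ∫_M |[η_y^i, k]|² dμ(y)). -/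
open MeasureTheory
open scoped InnerProductSpace

/-! Since `[k, S k] = ∑ᵢ ∫ |[η_y^i, k]|² dμ(y) ≥ 0`, the operator `J ∘ S` is positive, and hence so is
`J ∘ S⁻¹ = (S⁻¹)* (J ∘ S) S⁻¹`. Cauchy–Schwarz for the positive form `⟪u, J S⁻¹ v⟫` at
`u = η_x^i`, `v = S k` gives `|[η_x^i, k]|² ≤ [η_x^i, S⁻¹ η_x^i] · [S k, k]`, and `[S k, k]` is
the integral on the right. -/

namespace ContinuousLinearMap

variable {𝕜 E : Type*} [RCLike 𝕜] [NormedAddCommGroup E] [InnerProductSpace 𝕜 E]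

theorem IsPositive.norm_inner_map_sq_le {T : E →L[𝕜] E} (hT : T.IsPositive) (u v : E) :
    ‖⟪u, T v⟫_𝕜‖ ^ 2 ≤ RCLike.re ⟪u, T u⟫_𝕜 * RCLike.re ⟪v, T v⟫_𝕜 := by
  let core : PreInnerProductSpace.Core 𝕜 E :=
    { inner := fun u v => ⟪u, T v⟫_𝕜
      conj_inner_symm := fun u v => by
        rw [inner_conj_symm, hT.inner_left_eq_inner_right]
      re_inner_nonneg := hT.re_inner_nonneg_right
      add_left := fun _ _ _ => inner_add_left _ _ _
      smul_left := fun _ _ _ => inner_smul_left _ _ _ }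
  have hsymm : ‖⟪v, T u⟫_𝕜‖ = ‖⟪u, T v⟫_𝕜‖ := by
    rw [← hT.inner_left_eq_inner_right, ← inner_conj_symm, RCLike.norm_conj]
  have h : ‖⟪u, T v⟫_𝕜‖ * ‖⟪v, T u⟫_𝕜‖ ≤ RCLike.re ⟪u, T u⟫_𝕜 * RCLike.re ⟪v, T v⟫_𝕜 :=
    InnerProductSpace.Core.inner_mul_inner_self_le (c := core) u v
  rwa [hsymm, ← sq] at h

theorem IsPositive.comp_rightInverse [CompleteSpace E] {A S R : E →L[𝕜] E}
    (hA : IsSelfAdjoint A) (hAS : (A ∘L S).IsPositive) (hSR : S ∘L R = 1) :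
    (A ∘L R).IsPositive := by
  have hadj : adjoint (A ∘L R) = adjoint R ∘L (A ∘L S) ∘L R := by
    rw [adjoint_comp, hA.adjoint_eq, comp_assoc, hSR, one_def, comp_id]
  have hpos : (adjoint (A ∘L R)).IsPositive := hadj ▸ hAS.adjoint_conj R
  have hself : adjoint (A ∘L R) = A ∘L R := by
    simpa only [adjoint_adjoint] using hpos.isSelfAdjoint.adjoint_eq.symm
  rwa [hself] at hpos

end ContinuousLinearMap

section KreinFrame

variable {K M ι : Type*} [NormedAddCommGroup K] [InnerProductSpace ℂ K] [MeasurableSpace M]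
  [Fintype ι]

def IsKreinFrameOperator (J : K →L[ℂ] K) (μ : Measure M) (η : ι → M → K) (S : K →L[ℂ] K) :
    Prop :=
  ∀ k₁ k₂ : K, ⟪k₁, J (S k₂)⟫_ℂ = ∑ i, ∫ x, ⟪k₁, J (η i x)⟫_ℂ * ⟪η i x, J k₂⟫_ℂ ∂μ

variable [CompleteSpace K] {J S : K →L[ℂ] K} {μ : Measure M} {η : ι → M → K}

theorem IsKreinFrameOperator.inner_apply_self (hJ : IsSelfAdjoint J)
    (hS : IsKreinFrameOperator J μ η S) (k : K) :
    ⟪k, J (S k)⟫_ℂ = ((∑ i, ∫ x, ‖⟪η i x, J k⟫_ℂ‖ ^ 2 ∂μ : ℝ) : ℂ) := by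
  have hconj : ∀ h, ⟪k, J h⟫_ℂ = starRingEnd ℂ ⟪h, J k⟫_ℂ := fun h => by
    rw [inner_conj_symm]
    exact (hJ.isSymmetric k h).symm
  simp only [hS k k, hconj, RCLike.conj_mul, ← RCLike.ofReal_pow, integral_ofReal,
    Complex.ofReal_sum]
  rfl

theorem IsKreinFrameOperator.isPositive_comp (hJ : IsSelfAdjoint J)
    (hS : IsKreinFrameOperator J μ η S) : (J ∘L S).IsPositive := by
  refine (ContinuousLinearMap.isPositive_iff_complex _).mpr fun k => ?_
  rw [ContinuousLinearMap.comp_apply, ← inner_conj_symm, hS.inner_apply_self hJ k,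
    Complex.conj_ofReal, RCLike.re_to_complex, Complex.ofReal_re]
  exact ⟨rfl, Finset.sum_nonneg fun i _ => integral_nonneg fun x => by positivity⟩

end KreinFrame

theorem point_evaluation_bound_general
    {K : Type*} [NormedAddCommGroup K] [InnerProductSpace ℂ K] [CompleteSpace K]
    (J : K →L[ℂ] K) (hJsa : IsSelfAdjoint J)
    {M : Type*} [MeasurableSpace M] (μ : Measure M)
    (n : ℕ) (η : Fin n → M → K)
    (S : K →L[ℂ] K)
    (hS : ∀ k₁ k₂ : K,
      ⟪k₁, J (S k₂)⟫_ℂ = ∑ i : Fin n, ∫ x, ⟪k₁, J (η i x)⟫_ℂ * ⟪η i x, J k₂⟫_ℂ ∂μ)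
    (Sinv : K →L[ℂ] K) (hSinv₁ : S ∘L Sinv = 1) (hSinv₂ : Sinv ∘L S = 1) :
    (∀ (x : M) (i : Fin n),
      (⟪η i x, J (Sinv (η i x))⟫_ℂ).im = 0 ∧ 0 ≤ (⟪η i x, J (Sinv (η i x))⟫_ℂ).re) ∧
    (∀ (k : K) (x : M),
      ∑ i : Fin n, ‖⟪η i x, J k⟫_ℂ‖ ^ 2 ≤
        (∑ i : Fin n, (⟪η i x, J (Sinv (η i x))⟫_ℂ).re) *
          (∑ i : Fin n, ∫ y, ‖⟪η i y, J k⟫_ℂ‖ ^ 2 ∂μ)) := by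
  have hJS : (J ∘L S).IsPositive := IsKreinFrameOperator.isPositive_comp hJsa hS
  have hJSinv : (J ∘L Sinv).IsPositive := hJS.comp_rightInverse hJsa hSinv₁
  have hSinvS : ∀ k, Sinv (S k) = k := fun k => by
    simpa using DFunLike.congr_fun hSinv₂ k
  refine ⟨fun x i => ?_, fun k x => ?_⟩
  · obtain ⟨hre, him⟩ := Complex.nonneg_iff.mp (hJSinv.inner_nonneg_right (η i x))
    exact ⟨him.symm, hre⟩
  have hD : RCLike.re ⟪S k, J k⟫_ℂ = ∑ i : Fin n, ∫ y, ‖⟪η i y, J k⟫_ℂ‖ ^ 2 ∂μ := by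
    have hsymm : ⟪S k, J k⟫_ℂ = ⟪k, J (S k)⟫_ℂ :=
      (hJsa.isSymmetric (S k) k).symm.trans (hJS.inner_left_eq_inner_right k k)
    rw [hsymm, IsKreinFrameOperator.inner_apply_self hJsa hS]
    exact Complex.ofReal_re _
  rw [Finset.sum_mul]
  refine Finset.sum_le_sum fun i _ => ?_
  have hCS := hJSinv.norm_inner_map_sq_le (η i x) (S k)
  simp only [ContinuousLinearMap.comp_apply, hSinvS, hD] at hCS
  exact hCS

/-- For a continuous frame `{η_x^i}` of rank `n` for the Krein space
`(K, [·,·])`, `[h,k] = ⟪h, J k⟫_ℂ`, with frame operator `S` and bounded inverse `S⁻¹`,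
the numbers `[η_x^i, S⁻¹η_x^i]` are nonnegative reals, and the point evaluations on the
range of the analysis operator are continuous:
`∑_i |[η_x^i, k]|² ≤ (∑_i [η_x^i, S⁻¹η_x^i]) · (∑_i ∫ |[η_y^i, k]|² dμ(y))`. -/
theorem point_evaluation_bound
    {K : Type*} [NormedAddCommGroup K] [InnerProductSpace ℂ K] [CompleteSpace K]
    (J : K →L[ℂ] K) (hJsa : IsSelfAdjoint J) (hJ2 : ∀ k : K, J (J k) = k)
    {M : Type*} [MeasurableSpace M] (μ : Measure M)
    (n : ℕ) (η : Fin n → M → K)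
    (hmeas : ∀ (i : Fin n) (k : K), Measurable fun x : M => ⟪η i x, k⟫_ℂ)
    (a b : ℝ) (ha : 0 < a) (hab : a ≤ b)
    (hframe : ∀ k : K,
      a * ‖k‖ ^ 2 ≤ ∑ i : Fin n, ∫ x, ‖⟪η i x, J k⟫_ℂ‖ ^ 2 ∂μ ∧
      ∑ i : Fin n, ∫ x, ‖⟪η i x, J k⟫_ℂ‖ ^ 2 ∂μ ≤ b * ‖k‖ ^ 2)
    (S : K →L[ℂ] K)
    (hS : ∀ k₁ k₂ : K,
      ⟪k₁, J (S k₂)⟫_ℂ = ∑ i : Fin n, ∫ x, ⟪k₁, J (η i x)⟫_ℂ * ⟪η i x, J k₂⟫_ℂ ∂μ)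
    (Sinv : K →L[ℂ] K) (hSinv₁ : S ∘L Sinv = 1) (hSinv₂ : Sinv ∘L S = 1) :
    (∀ (x : M) (i : Fin n),
      (⟪η i x, J (Sinv (η i x))⟫_ℂ).im = 0 ∧ 0 ≤ (⟪η i x, J (Sinv (η i x))⟫_ℂ).re) ∧
    (∀ (k : K) (x : M),
      ∑ i : Fin n, ‖⟪η i x, J k⟫_ℂ‖ ^ 2 ≤
        (∑ i : Fin n, (⟪η i x, J (Sinv (η i x))⟫_ℂ).re) *
          (∑ i : Fin n, ∫ y, ‖⟪η i y, J k⟫_ℂ‖ ^ 2 ∂μ)) :=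
  point_evaluation_bound_general J hJsa μ n η S hS Sinv hSinv₁ hSinv₂
end

section
/- Let H be a complex Hilbert space and let W : H → H be a bounded self-adjoint operator with 0 not in the spectrum of W. Let |W| be the absolute value of W (positive, invertible) and |W|^{-1/2} the inverse of its positive square root. Let (M,𝔅,μ) be a measure space and η^i : M → H, i=1,…,n, weakly measurable maps, and let 0 < a ≤ b. Then {η_x^1,…,η_x^n}_{x∈M} is a continuous frame of rank n for the Hilbert space H with frame bounds a ≤ b (i.e. a‖k‖² ≤ ∑_{i=1}^n ∫_M |⟨η_x^i, k⟩|² dμ(x) ≤ b‖k‖² for all k ∈ H) if and only if {|W|^{-1/2}η_x^1,…,|W|^{-1/2}η_x^n}_{x∈M} is a continuous frame of rank n for the Krein space H_W with the same frame bounds, i.e. a·⟨k, |W| k⟩ ≤ ∑_{i=1}^n ∫_M |⟨|W|^{-1/2}η_x^i, W k⟩|² dμ(x) ≤ b·⟨k, |W| k⟩ for all k ∈ H. -/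
/-! Put `T = |W|^{-1/2} W`, an invertible operator. As `|W|^{-1/2}` is self-adjoint,
`⟪|W|^{-1/2} η, W k⟫ = ⟪η, T k⟫`; as `|W| = CFC.abs W` commutes with `W`,
`T* T = W |W|⁻¹ W = |W|`, i.e. `⟪k, |W| k⟫ = ‖T k‖²`. So the Krein-space frame inequalities
at `k` are the Hilbert-space ones at `T k`, and `T` is onto. -/

open MeasureTheory
open scoped InnerProductSpace

lemma IsSelfAdjoint.of_mul_eq_one {R : Type*} [Monoid R] [StarMul R] {r r' : R}
    (hr : IsSelfAdjoint r) (h : r * r' = 1) : IsSelfAdjoint r' :=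
  left_inv_eq_right_inv (by simpa [hr.star_eq] using congr_arg star h) h

lemma Units.mul_inv_mul_eq_of_mul_self_eq {A : Type*} [Monoid A] (u : Aˣ) {w : A}
    (hc : Commute (u : A) w) (h : (u : A) * u = w * w) : w * ↑u⁻¹ * w = u := by
  rw [← hc.units_inv_left.eq, mul_assoc, ← h, ← mul_assoc, u.inv_mul, one_mul]

section CStarAlgebra

variable {A : Type*} [CStarAlgebra A] [PartialOrder A] [StarOrderedRing A]

lemma Commute.of_mul_self_eq_star_mul_self {a b : A} (ha : IsStarNormal a) (hb : 0 ≤ b)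
    (h : b * b = star a * a) : Commute b a := by
  obtain rfl : CFC.abs a = b := CFC.sqrt_unique h hb
  exact CFC.commute_abs_self a

lemma star_mul_self_eq_of_inv_sqrt_abs {w s r r' : A} (hw : IsSelfAdjoint w) (hs : 0 ≤ s)
    (hsw : s * s = w * w) (hr : IsSelfAdjoint r) (hrs : r * r = s) (h₁ : r * r' = 1)
    (h₂ : r' * r = 1) : star (r' * w) * (r' * w) = s := by
  let u : Aˣ := ⟨r, r', h₁, h₂⟩
  have hu : ((u * u : Aˣ) : A) = s := hrs
  have hc : Commute ((u * u : Aˣ) : A) w := hu ▸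
    Commute.of_mul_self_eq_star_mul_self hw.isStarNormal hs (by rw [hsw, hw.star_eq])
  have hu_inv : (((u * u)⁻¹ : Aˣ) : A) = r' * r' := by simp [u, mul_inv_rev]
  rw [star_mul, hw.star_eq, (hr.of_mul_eq_one h₁).star_eq, ← mul_assoc, mul_assoc w, ← hu_inv,
    (u * u).mul_inv_mul_eq_of_mul_self_eq hc (by rw [hu, hsw]), hu]

end CStarAlgebra

theorem frame_transfer_regular_Gram_general
    {H : Type*} [NormedAddCommGroup H] [InnerProductSpace ℂ H] [CompleteSpace H]
    (W : H →L[ℂ] H) (hWsa : IsSelfAdjoint W) (hspec : (0 : ℂ) ∉ spectrum ℂ W)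
    (absW : H →L[ℂ] H) (habs_pos : absW.IsPositive) (habs_sq : absW ∘L absW = W ∘L W)
    (R : H →L[ℂ] H) (hR_pos : R.IsPositive) (hR_sq : R ∘L R = absW)
    (Rinv : H →L[ℂ] H) (hRinv₁ : R ∘L Rinv = 1) (hRinv₂ : Rinv ∘L R = 1)
    {M : Type*} [MeasurableSpace M] (μ : Measure M)
    (n : ℕ) (η : Fin n → M → H)
    (a b : ℝ) :
    (∀ k : H,
      a * ‖k‖ ^ 2 ≤ ∑ i : Fin n, ∫ x, ‖⟪η i x, k⟫_ℂ‖ ^ 2 ∂μ ∧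
      ∑ i : Fin n, ∫ x, ‖⟪η i x, k⟫_ℂ‖ ^ 2 ∂μ ≤ b * ‖k‖ ^ 2) ↔
    (∀ k : H,
      a * (⟪k, absW k⟫_ℂ).re ≤ ∑ i : Fin n, ∫ x, ‖⟪Rinv (η i x), W k⟫_ℂ‖ ^ 2 ∂μ ∧
      ∑ i : Fin n, ∫ x, ‖⟪Rinv (η i x), W k⟫_ℂ‖ ^ 2 ∂μ ≤ b * (⟪k, absW k⟫_ℂ).re) := by
  obtain ⟨T, hT⟩ : ∃ T : H →L[ℂ] H, T = Rinv * W := ⟨_, rfl⟩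
  have hT_unit : IsUnit T :=
    hT ▸ (Units.isUnit ⟨Rinv, R, hRinv₂, hRinv₁⟩).mul (spectrum.isUnit_of_zero_notMem ℂ hspec)
  have hRinv_sa : IsSelfAdjoint Rinv := hR_pos.isSelfAdjoint.of_mul_eq_one hRinv₁
  have hJ_norm (k : H) : (⟪k, absW k⟫_ℂ).re = ‖T k‖ ^ 2 := by
    rw [T.apply_norm_sq_eq_inner_adjoint_right, ← ContinuousLinearMap.star_eq_adjoint,
      ← ContinuousLinearMap.mul_def, hT,
      star_mul_self_eq_of_inv_sqrt_abs hWsa ((ContinuousLinearMap.nonneg_iff_isPositive _).2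
        habs_pos) habs_sq hR_pos.isSelfAdjoint hR_sq hRinv₁ hRinv₂]
    rfl
  have hinner (z k : H) : ⟪Rinv z, W k⟫_ℂ = ⟪z, T k⟫_ℂ := by
    rw [← hRinv_sa.adjoint_eq, ContinuousLinearMap.adjoint_inner_left, hT]; rfl
  simp only [hinner, hJ_norm]
  exact (ContinuousLinearMap.isUnit_iff_bijective.1 hT_unit).surjective.forall

/-- Let `W` be a bounded self-adjoint operator on a complex Hilbert
space `H` with `0 ∉ spec(W)` (a regular Gram operator), let `|W|` be its absolute value
(positive square root of `W∘W`), and let `R = |W|^{1/2}` be the positive square root of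
`|W|`, with bounded inverse `R⁻¹ = |W|^{-1/2}`.  A family `{η_x^i}` is a continuous frame
of rank `n` for the Hilbert space `H` with frame bounds `a ≤ b` if and only if
`{|W|^{-1/2} η_x^i}` is a continuous frame for the Krein space `H_W` (with the `W`-metric
`[f,g] = ⟪f, W g⟫` and squared `J`-norm `⟪k, |W| k⟫`) with the same frame bounds. -/
theorem frame_transfer_regular_Gram
    {H : Type*} [NormedAddCommGroup H] [InnerProductSpace ℂ H] [CompleteSpace H]
    (W : H →L[ℂ] H) (hWsa : IsSelfAdjoint W) (hspec : (0 : ℂ) ∉ spectrum ℂ W)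
    (absW : H →L[ℂ] H) (habs_pos : absW.IsPositive) (habs_sq : absW ∘L absW = W ∘L W)
    (R : H →L[ℂ] H) (hR_pos : R.IsPositive) (hR_sq : R ∘L R = absW)
    (Rinv : H →L[ℂ] H) (hRinv₁ : R ∘L Rinv = 1) (hRinv₂ : Rinv ∘L R = 1)
    {M : Type*} [MeasurableSpace M] (μ : Measure M)
    (n : ℕ) (η : Fin n → M → H)
    (hmeas : ∀ (i : Fin n) (k : H), Measurable fun x : M => ⟪η i x, k⟫_ℂ)
    (a b : ℝ) (ha : 0 < a) (hab : a ≤ b) :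
    (∀ k : H,
      a * ‖k‖ ^ 2 ≤ ∑ i : Fin n, ∫ x, ‖⟪η i x, k⟫_ℂ‖ ^ 2 ∂μ ∧
      ∑ i : Fin n, ∫ x, ‖⟪η i x, k⟫_ℂ‖ ^ 2 ∂μ ≤ b * ‖k‖ ^ 2) ↔
    (∀ k : H,
      a * (⟪k, absW k⟫_ℂ).re ≤ ∑ i : Fin n, ∫ x, ‖⟪Rinv (η i x), W k⟫_ℂ‖ ^ 2 ∂μ ∧
      ∑ i : Fin n, ∫ x, ‖⟪Rinv (η i x), W k⟫_ℂ‖ ^ 2 ∂μ ≤ b * (⟪k, absW k⟫_ℂ).re) :=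
  frame_transfer_regular_Gram_general W hWsa hspec absW habs_pos habs_sq R hR_pos hR_sq Rinv hRinv₁
    hRinv₂ μ n η a b
end
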